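/- Let slDs be the first-order operator acting on smooth functions phi : (0,π) × (0,2π) → ℂ^2 (coordinates (theta, phi_angle)) by slDs phi = i*sigma_x*(∂_theta phi + (cot(theta)/2)*phi) - i*sigma_y*(1/sin(theta))*∂_phi_angle phi. Then for every smooth compactly supported phi : (0,π) × (0,2π) → ℂ^2 one has the spinorial Poincaré inequality ∫ |slDs phi|^2 sin(theta) dtheta dphi_angle ≥ ∫ |phi|^2 sin(theta) dtheta dphi_angle, where |·| is the ℂ^2 norm and the integrals are over (0,π) × (0,2π). -/

import Mathlib

noncomputable section

open Complex MeasureTheory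

/-- The Pauli matrix `σ_x`. -/
def sigmaX : Matrix (Fin 2) (Fin 2) ℂ := !![0, 1; 1, 0]

/-- The Pauli matrix `σ_y`. -/
def sigmaY : Matrix (Fin 2) (Fin 2) ℂ := !![0, -I; I, 0]

/-- The Pauli matrix `σ_z`. -/
def sigmaZ : Matrix (Fin 2) (Fin 2) ℂ := !![1, 0; 0, -1]

/-- Partial derivative in the first variable `θ`. -/
def pdTheta (phi : ℝ × ℝ → Fin 2 → ℂ) (p : ℝ × ℝ) : Fin 2 → ℂ :=
  deriv (fun t : ℝ => phi (t, p.2)) p.1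

/-- Partial derivative in the second variable `φ`. -/
def pdPhi (phi : ℝ × ℝ → Fin 2 → ℂ) (p : ℝ × ℝ) : Fin 2 → ℂ :=
  deriv (fun t : ℝ => phi (p.1, t)) p.2

/-- The Dirac operator on the 2-sphere acting on spinors. -/
def slDs (phi : ℝ × ℝ → Fin 2 → ℂ) (p : ℝ × ℝ) : Fin 2 → ℂ :=
  I • sigmaX.mulVec
      (pdTheta phi p + ((Real.cos p.1 / Real.sin p.1 / 2 : ℝ) : ℂ) • phi p) -
    I • sigmaY.mulVec ((((Real.sin p.1)⁻¹ : ℝ) : ℂ) • pdPhi phi p)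

/-- Squared `ℂ²` norm. -/
def nsq (v : Fin 2 → ℂ) : ℝ := ∑ i, Complex.normSq (v i)

/-- The coordinate rectangle `(0,π) × (0,2π)` of the sphere. -/
def sphereRect : Set (ℝ × ℝ) := Set.Ioo 0 Real.pi ×ˢ Set.Ioo 0 (2 * Real.pi)

/-- The spinorial covariant derivative `∇_{e₂} φ = (1/sinθ)∂_φ φ + i σ_z (cotθ/2) φ`. -/
def covE2 (phi : ℝ × ℝ → Fin 2 → ℂ) (p : ℝ × ℝ) : Fin 2 → ℂ :=
  (((Real.sin p.1)⁻¹ : ℝ) : ℂ) • pdPhi phi p +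
    (I * ((Real.cos p.1 / Real.sin p.1 / 2 : ℝ) : ℂ)) • sigmaZ.mulVec (phi p)


/-- scalar partial derivatives -/
def pt (u : ℝ × ℝ → ℂ) (p : ℝ × ℝ) : ℂ := deriv (fun t : ℝ => u (t, p.2)) p.1
def pp (u : ℝ × ℝ → ℂ) (p : ℝ × ℝ) : ℂ := deriv (fun t : ℝ => u (p.1, t)) p.2

lemma hasDerivAt_fst (u : ℝ × ℝ → ℂ) (hu : ContDiff ℝ (⊤ : ℕ∞) u) (p : ℝ × ℝ) :
    HasDerivAt (fun t : ℝ => u (t, p.2)) (fderiv ℝ u p ((1:ℝ), (0:ℝ))) p.1 := by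
  have h1 : HasDerivAt (fun t : ℝ => (t, p.2)) ((1:ℝ), (0:ℝ)) p.1 := by
    have := (HasDerivAt.prodMk (hasDerivAt_id p.1) (hasDerivAt_const p.1 p.2))
    simpa using this
  have h2 := (hu.differentiable (by simp) p).hasFDerivAt
  simpa [Function.comp_def] using h2.comp_hasDerivAt p.1 h1

lemma hasDerivAt_snd (u : ℝ × ℝ → ℂ) (hu : ContDiff ℝ (⊤ : ℕ∞) u) (p : ℝ × ℝ) :
    HasDerivAt (fun t : ℝ => u (p.1, t)) (fderiv ℝ u p ((0:ℝ), (1:ℝ))) p.2 := by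
  have h1 : HasDerivAt (fun t : ℝ => (p.1, t)) ((0:ℝ), (1:ℝ)) p.2 := by
    have := (HasDerivAt.prodMk (hasDerivAt_const p.2 p.1) (hasDerivAt_id p.2))
    simpa using this
  have h2 := (hu.differentiable (by simp) p).hasFDerivAt
  simpa [Function.comp_def] using h2.comp_hasDerivAt p.2 h1

lemma pt_eq (u : ℝ × ℝ → ℂ) (hu : ContDiff ℝ (⊤ : ℕ∞) u) (p : ℝ × ℝ) :
    pt u p = fderiv ℝ u p ((1:ℝ), (0:ℝ)) := (hasDerivAt_fst u hu p).deriv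

lemma pp_eq (u : ℝ × ℝ → ℂ) (hu : ContDiff ℝ (⊤ : ℕ∞) u) (p : ℝ × ℝ) :
    pp u p = fderiv ℝ u p ((0:ℝ), (1:ℝ)) := (hasDerivAt_snd u hu p).deriv

lemma hasDerivAt_pt (u : ℝ × ℝ → ℂ) (hu : ContDiff ℝ (⊤ : ℕ∞) u) (p : ℝ × ℝ) :
    HasDerivAt (fun t : ℝ => u (t, p.2)) (pt u p) p.1 := by
  rw [pt_eq u hu]; exact hasDerivAt_fst u hu p

lemma hasDerivAt_pp (u : ℝ × ℝ → ℂ) (hu : ContDiff ℝ (⊤ : ℕ∞) u) (p : ℝ × ℝ) :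
    HasDerivAt (fun t : ℝ => u (p.1, t)) (pp u p) p.2 := by
  rw [pp_eq u hu]; exact hasDerivAt_snd u hu p

lemma contDiff_apply_fderiv (u : ℝ × ℝ → ℂ) (hu : ContDiff ℝ (⊤ : ℕ∞) u) (v : ℝ × ℝ) :
    ContDiff ℝ (⊤ : ℕ∞) (fun p => fderiv ℝ u p v) := by
  have h1 : ContDiff ℝ (⊤ : ℕ∞) (fderiv ℝ u) := hu.fderiv_right (by simp)
  exact (ContinuousLinearMap.apply ℝ ℂ v).contDiff.comp h1

lemma contDiff_pt (u : ℝ × ℝ → ℂ) (hu : ContDiff ℝ (⊤ : ℕ∞) u) : ContDiff ℝ (⊤ : ℕ∞) (pt u) := by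
  have h := contDiff_apply_fderiv u hu ((1:ℝ), (0:ℝ))
  have : pt u = fun p => fderiv ℝ u p ((1:ℝ), (0:ℝ)) := funext (pt_eq u hu)
  rw [this]; exact h

lemma contDiff_pp (u : ℝ × ℝ → ℂ) (hu : ContDiff ℝ (⊤ : ℕ∞) u) : ContDiff ℝ (⊤ : ℕ∞) (pp u) := by
  have h := contDiff_apply_fderiv u hu ((0:ℝ), (1:ℝ))
  have : pp u = fun p => fderiv ℝ u p ((0:ℝ), (1:ℝ)) := funext (pp_eq u hu)
  rw [this]; exact h

/-- Clairaut / symmetry of mixed partials. -/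
lemma mixed_symm (u : ℝ × ℝ → ℂ) (hu : ContDiff ℝ (⊤ : ℕ∞) u) (p : ℝ × ℝ) :
    pt (pp u) p = pp (pt u) p := by
  have hfd : ContDiff ℝ (⊤ : ℕ∞) (fderiv ℝ u) := hu.fderiv_right (by simp)
  have hsymm := second_derivative_symmetric (f := u) (f' := fderiv ℝ u)
    (f'' := fderiv ℝ (fderiv ℝ u) p)
    (fun y => (hu.differentiable (by simp) y).hasFDerivAt)
    ((hfd.differentiable (by simp) p).hasFDerivAt)
  have e1 : pt (pp u) p = (fderiv ℝ (fderiv ℝ u) p ((1:ℝ),(0:ℝ))) ((0:ℝ),(1:ℝ)) := by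
    rw [pt_eq (pp u) (contDiff_pp u hu) p]
    have : pp u = fun q => (ContinuousLinearMap.apply ℝ ℂ ((0:ℝ),(1:ℝ))) (fderiv ℝ u q) :=
      funext (pp_eq u hu)
    rw [this, fderiv_comp' p ((ContinuousLinearMap.apply ℝ ℂ ((0:ℝ),(1:ℝ))).differentiableAt)
      (hfd.differentiable (by simp) p)]
    simp
  have e2 : pp (pt u) p = (fderiv ℝ (fderiv ℝ u) p ((0:ℝ),(1:ℝ))) ((1:ℝ),(0:ℝ)) := by
    rw [pp_eq (pt u) (contDiff_pt u hu) p]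
    have : pt u = fun q => (ContinuousLinearMap.apply ℝ ℂ ((1:ℝ),(0:ℝ))) (fderiv ℝ u q) :=
      funext (pt_eq u hu)
    rw [this, fderiv_comp' p ((ContinuousLinearMap.apply ℝ ℂ ((1:ℝ),(0:ℝ))).differentiableAt)
      (hfd.differentiable (by simp) p)]
    simp
  rw [e1, e2, hsymm]

/-- vanishing of partial derivatives off the support -/
lemma pt_eq_zero_of_not_mem (u : ℝ × ℝ → ℂ) (p : ℝ × ℝ) (hp : p ∉ tsupport u) :
    pt u p = 0 := by
  have hopen : IsOpen (tsupport u)ᶜ := (isClosed_tsupport u).isOpen_compl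
  have hev : (fun t : ℝ => u (t, p.2)) =ᶠ[nhds p.1] (fun _ => 0) := by
    have hc : Continuous (fun t : ℝ => (t, p.2)) := by fun_prop
    have : ∀ᶠ t in nhds p.1, (t, p.2) ∈ (tsupport u)ᶜ :=
      hc.continuousAt.preimage_mem_nhds (hopen.mem_nhds hp)
    exact this.mono (fun t ht => image_eq_zero_of_notMem_tsupport ht)
  rw [pt, hev.deriv_eq]; simp

lemma pp_eq_zero_of_not_mem (u : ℝ × ℝ → ℂ) (p : ℝ × ℝ) (hp : p ∉ tsupport u) :
    pp u p = 0 := by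
  have hopen : IsOpen (tsupport u)ᶜ := (isClosed_tsupport u).isOpen_compl
  have hev : (fun t : ℝ => u (p.1, t)) =ᶠ[nhds p.2] (fun _ => 0) := by
    have hc : Continuous (fun t : ℝ => (p.1, t)) := by fun_prop
    have : ∀ᶠ t in nhds p.2, (p.1, t) ∈ (tsupport u)ᶜ :=
      hc.continuousAt.preimage_mem_nhds (hopen.mem_nhds hp)
    exact this.mono (fun t ht => image_eq_zero_of_notMem_tsupport ht)
  rw [pp, hev.deriv_eq]; simp

lemma tsupport_pt_subset (u : ℝ × ℝ → ℂ) : tsupport (pt u) ⊆ tsupport u := by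
  apply closure_minimal _ (isClosed_tsupport u)
  intro p hp
  by_contra hmem
  exact hp (pt_eq_zero_of_not_mem u p hmem)

lemma tsupport_pp_subset (u : ℝ × ℝ → ℂ) : tsupport (pp u) ⊆ tsupport u := by
  apply closure_minimal _ (isClosed_tsupport u)
  intro p hp
  by_contra hmem
  exact hp (pp_eq_zero_of_not_mem u p hmem)


lemma hasDerivAt_normSq_comp {f : ℝ → ℂ} {f' : ℂ} {x : ℝ} (hf : HasDerivAt f f' x) :
    HasDerivAt (fun t => Complex.normSq (f t)) (2 * ((starRingEnd ℂ) (f x) * f').re) x := by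
  have hre : HasDerivAt (fun t => (f t).re) f'.re x :=
    (Complex.reCLM.hasFDerivAt.comp_hasDerivAt x hf)
  have him : HasDerivAt (fun t => (f t).im) f'.im x :=
    (Complex.imCLM.hasFDerivAt.comp_hasDerivAt x hf)
  have := (hre.mul hre).add (him.mul him)
  have heq : (fun t => Complex.normSq (f t)) = fun t => (f t).re * (f t).re + (f t).im * (f t).im := by
    funext t; simp [Complex.normSq_apply]
  rw [heq]
  refine this.congr_deriv ?_
  simp [Complex.mul_re, Complex.conj_re, Complex.conj_im]
  ring

lemma hasDerivAt_conj_mul {f g : ℝ → ℂ} {f' g' : ℂ} {x : ℝ}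
    (hf : HasDerivAt f f' x) (hg : HasDerivAt g g' x) :
    HasDerivAt (fun t => (starRingEnd ℂ) (f t) * g t)
      ((starRingEnd ℂ) f' * g x + (starRingEnd ℂ) (f x) * g') x := by
  have hc : HasDerivAt (fun t => (starRingEnd ℂ) (f t)) ((starRingEnd ℂ) f') x := by
    have := (Complex.conjCLE.toContinuousLinearMap.hasFDerivAt.comp_hasDerivAt x hf)
    simpa [Function.comp_def] using this
  exact hc.mul hg

lemma hasDerivAt_im_comp {f : ℝ → ℂ} {f' : ℂ} {x : ℝ} (hf : HasDerivAt f f' x) :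
    HasDerivAt (fun t => (f t).im) f'.im x :=
  Complex.imCLM.hasFDerivAt.comp_hasDerivAt x hf

set_option maxHeartbeats 2000000 in
lemma key_alg (s c n ε : ℝ) (hs : s ≠ 0) (hε : ε = 1 ∨ ε = -1) (u ut up w : ℂ) :
    normSq (I * (ut + ((c / s / 2 : ℝ) : ℂ) * u) + (ε : ℂ) * (((s⁻¹ : ℝ)) : ℂ) * up) * s
    = normSq u * s
      + s * normSq (ut - ((c / s / 4 : ℝ) : ℂ) * u)
      + s⁻¹ * normSq (up + I * (ε : ℂ) * ((c / 2 : ℝ) : ℂ) * u - (n : ℂ) * u)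
      + (3 / 16) * (c ^ 2 / s) * normSq u
      + ((1 - s ^ 2 - c ^ 2) / (4 * s)) * normSq u
      + (-(3 * s / 4) * normSq u + 3 * c / 4 * (2 * ((starRingEnd ℂ) u * ut).re)
          + ε * (((starRingEnd ℂ) ut * up).im + ((starRingEnd ℂ) u * w).im))
      + ((-1 / 4 - n ^ 2) / s * normSq u + n / s * (2 * ((starRingEnd ℂ) u * up).re)
          - ε * (((starRingEnd ℂ) up * ut).im + ((starRingEnd ℂ) u * w).im)) := by
  obtain rfl | rfl := hε <;>
  · simp only [Complex.normSq_apply, Complex.add_re, Complex.add_im, Complex.sub_re,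
      Complex.sub_im, Complex.mul_re, Complex.mul_im, Complex.I_re, Complex.I_im,
      Complex.ofReal_re, Complex.ofReal_im, Complex.conj_re, Complex.conj_im,
      Complex.ofReal_one, Complex.one_re, Complex.one_im, Complex.neg_re, Complex.neg_im]
    field_simp
    ring

/-- The θ-direction divergence potential. -/
def Ffun (ε : ℝ) (u : ℝ × ℝ → ℂ) (p : ℝ × ℝ) : ℝ :=
  3 / 4 * Real.cos p.1 * Complex.normSq (u p) + ε * ((starRingEnd ℂ) (u p) * pp u p).im

/-- Its θ-partial derivative. -/
def Fpd (ε : ℝ) (u : ℝ × ℝ → ℂ) (p : ℝ × ℝ) : ℝ :=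
  -(3 * Real.sin p.1 / 4) * Complex.normSq (u p)
  + 3 * Real.cos p.1 / 4 * (2 * ((starRingEnd ℂ) (u p) * pt u p).re)
  + ε * (((starRingEnd ℂ) (pt u p) * pp u p).im + ((starRingEnd ℂ) (u p) * pt (pp u) p).im)

lemma hasDerivAt_Ffun (ε : ℝ) (u : ℝ × ℝ → ℂ) (hu : ContDiff ℝ (⊤ : ℕ∞) u) (p : ℝ × ℝ) :
    HasDerivAt (fun t => Ffun ε u (t, p.2)) (Fpd ε u p) p.1 := by
  have hcos : HasDerivAt (fun t => 3 / 4 * Real.cos t) (3 / 4 * (-Real.sin p.1)) p.1 :=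
    (Real.hasDerivAt_cos p.1).const_mul (3 / 4)
  have hns : HasDerivAt (fun t => Complex.normSq (u (t, p.2)))
      (2 * ((starRingEnd ℂ) (u p) * pt u p).re) p.1 := by
    have := hasDerivAt_normSq_comp (hasDerivAt_pt u hu p)
    simpa using this
  have h1 : HasDerivAt (fun t => 3 / 4 * Real.cos t * Complex.normSq (u (t, p.2)))
      (3 / 4 * (-Real.sin p.1) * Complex.normSq (u p)
        + 3 / 4 * Real.cos p.1 * (2 * ((starRingEnd ℂ) (u p) * pt u p).re)) p.1 := by
    simpa [Pi.mul_def] using hcos.mul hns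
  have h2c : HasDerivAt (fun t => (starRingEnd ℂ) (u (t, p.2)) * pp u (t, p.2))
      ((starRingEnd ℂ) (pt u p) * pp u p + (starRingEnd ℂ) (u p) * pt (pp u) p) p.1 := by
    have := hasDerivAt_conj_mul (hasDerivAt_pt u hu p) (hasDerivAt_pt (pp u) (contDiff_pp u hu) p)
    simpa using this
  have h2 : HasDerivAt (fun t => ε * ((starRingEnd ℂ) (u (t, p.2)) * pp u (t, p.2)).im)
      (ε * (((starRingEnd ℂ) (pt u p) * pp u p).im + ((starRingEnd ℂ) (u p) * pt (pp u) p).im)) p.1 := by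
    have := (hasDerivAt_im_comp h2c).const_mul ε
    simpa using this
  have := h1.add h2
  have heq : (fun t => Ffun ε u (t, p.2))
      = fun t => 3 / 4 * Real.cos t * Complex.normSq (u (t, p.2))
        + ε * ((starRingEnd ℂ) (u (t, p.2)) * pp u (t, p.2)).im := by
    funext t; simp [Ffun]
  rw [heq]
  refine this.congr_deriv ?_
  simp [Fpd]; ring

/-- The φ-direction divergence potential. -/
def nn (x : ℝ) : ℝ := Real.cos (x / 2) / Real.sin (x / 2) / 2

def Gfun (ε : ℝ) (u : ℝ × ℝ → ℂ) (p : ℝ × ℝ) : ℝ :=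
  nn p.2 / Real.sin p.1 * Complex.normSq (u p) - ε * ((starRingEnd ℂ) (u p) * pt u p).im

def Gpd (ε : ℝ) (u : ℝ × ℝ → ℂ) (p : ℝ × ℝ) : ℝ :=
  (-1 / 4 - nn p.2 ^ 2) / Real.sin p.1 * Complex.normSq (u p)
  + nn p.2 / Real.sin p.1 * (2 * ((starRingEnd ℂ) (u p) * pp u p).re)
  - ε * (((starRingEnd ℂ) (pp u p) * pt u p).im + ((starRingEnd ℂ) (u p) * pp (pt u) p).im)

lemma hasDerivAt_nn (x : ℝ) (hx : Real.sin (x / 2) ≠ 0) :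
    HasDerivAt nn (-1 / 4 - nn x ^ 2) x := by
  have hhalf : HasDerivAt (fun t : ℝ => t / 2) (1 / 2) x := by
    simpa using (hasDerivAt_id x).div_const 2
  have hc : HasDerivAt (fun t : ℝ => Real.cos (t / 2)) (-Real.sin (x / 2) * (1 / 2)) x :=
    HasDerivAt.comp (h₂ := Real.cos) x (Real.hasDerivAt_cos (x / 2)) hhalf
  have hs : HasDerivAt (fun t : ℝ => Real.sin (t / 2)) (Real.cos (x / 2) * (1 / 2)) x :=
    HasDerivAt.comp (h₂ := Real.sin) x (Real.hasDerivAt_sin (x / 2)) hhalf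
  have hdiv := (hc.div hs hx).div_const 2
  have : nn = fun t => Real.cos (t / 2) / Real.sin (t / 2) / 2 := rfl
  rw [this]
  refine hdiv.congr_deriv ?_
  have hsq : Real.sin (x / 2) ^ 2 + Real.cos (x / 2) ^ 2 = 1 := Real.sin_sq_add_cos_sq _
  field_simp [nn]
  ring_nf

lemma hasDerivAt_Gfun (ε : ℝ) (u : ℝ × ℝ → ℂ) (hu : ContDiff ℝ (⊤ : ℕ∞) u) (p : ℝ × ℝ)
    (hx : Real.sin (p.2 / 2) ≠ 0) :
    HasDerivAt (fun t => Gfun ε u (p.1, t)) (Gpd ε u p) p.2 := by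
  have hn : HasDerivAt (fun t => nn t / Real.sin p.1) ((-1 / 4 - nn p.2 ^ 2) / Real.sin p.1) p.2 :=
    (hasDerivAt_nn p.2 hx).div_const _
  have hns : HasDerivAt (fun t => Complex.normSq (u (p.1, t)))
      (2 * ((starRingEnd ℂ) (u p) * pp u p).re) p.2 := by
    have := hasDerivAt_normSq_comp (hasDerivAt_pp u hu p)
    simpa using this
  have h1 := hn.mul hns
  have h2c : HasDerivAt (fun t => (starRingEnd ℂ) (u (p.1, t)) * pt u (p.1, t))
      ((starRingEnd ℂ) (pp u p) * pt u p + (starRingEnd ℂ) (u p) * pp (pt u) p) p.2 := by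
    have := hasDerivAt_conj_mul (hasDerivAt_pp u hu p) (hasDerivAt_pp (pt u) (contDiff_pt u hu) p)
    simpa using this
  have h2 : HasDerivAt (fun t => ε * ((starRingEnd ℂ) (u (p.1, t)) * pt u (p.1, t)).im)
      (ε * (((starRingEnd ℂ) (pp u p) * pt u p).im + ((starRingEnd ℂ) (u p) * pp (pt u) p).im)) p.2 := by
    have := (hasDerivAt_im_comp h2c).const_mul ε
    simpa using this
  have := h1.sub h2
  have heq : (fun t => Gfun ε u (p.1, t))
      = fun t => nn t / Real.sin p.1 * Complex.normSq (u (p.1, t))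
        - ε * ((starRingEnd ℂ) (u (p.1, t)) * pt u (p.1, t)).im := by
    funext t; simp [Gfun]
  rw [heq]
  refine this.congr_deriv ?_
  rfl
lemma exists_ab {S : Set ℝ} {c d : ℝ} (hS : IsCompact S) (hsub : S ⊆ Set.Ioo c d)
    (hcd : c < d) : ∃ a b, c < a ∧ a < b ∧ b < d ∧ S ⊆ Set.Icc a b := by
  rcases S.eq_empty_or_nonempty with h | hne
  · refine ⟨c + (d - c) / 3, c + (d - c) / 2, by linarith, by linarith, by linarith, ?_⟩
    rw [h]; exact Set.empty_subset _
  · have ha0 : sInf S ∈ S := hS.sInf_mem hne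
    have hb0 : sSup S ∈ S := hS.sSup_mem hne
    obtain ⟨hc1, hd1⟩ := hsub ha0
    obtain ⟨hc2, hd2⟩ := hsub hb0
    refine ⟨sInf S, (sSup S + d) / 2, hc1, ?_, by linarith, ?_⟩
    · have : sInf S ≤ sSup S := csInf_le_csSup hne hS.bddBelow hS.bddAbove
      linarith
    · intro x hx
      exact ⟨csInf_le hS.bddBelow hx, le_trans (le_csSup hS.bddAbove hx) (by linarith)⟩

lemma exists_box {K : Set (ℝ × ℝ)} (hK : IsCompact K) (hKR : K ⊆ sphereRect) :
    ∃ a b α β, 0 < a ∧ a < b ∧ b < Real.pi ∧ 0 < α ∧ α < β ∧ β < 2 * Real.pi ∧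
      K ⊆ Set.Icc a b ×ˢ Set.Icc α β := by
  have h1 : IsCompact (Prod.fst '' K) := hK.image continuous_fst
  have h2 : IsCompact (Prod.snd '' K) := hK.image continuous_snd
  have hs1 : Prod.fst '' K ⊆ Set.Ioo 0 Real.pi := by
    rintro x ⟨p, hp, rfl⟩; exact (hKR hp).1
  have hs2 : Prod.snd '' K ⊆ Set.Ioo 0 (2 * Real.pi) := by
    rintro x ⟨p, hp, rfl⟩; exact (hKR hp).2
  obtain ⟨a, b, h0a, hab, hbpi, hsub1⟩ := exists_ab h1 hs1 Real.pi_pos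
  obtain ⟨α, β, h0α, hαβ, hβ, hsub2⟩ := exists_ab h2 hs2 (by positivity)
  exact ⟨a, b, α, β, h0a, hab, hbpi, h0α, hαβ, hβ, fun p hp =>
    ⟨hsub1 ⟨p, hp, rfl⟩, hsub2 ⟨p, hp, rfl⟩⟩⟩

lemma measurableSet_sphereRect : MeasurableSet sphereRect :=
  measurableSet_Ioo.prod measurableSet_Ioo

lemma integrableOn_rect {f : ℝ × ℝ → ℝ} {K : Set (ℝ × ℝ)} (hK : IsCompact K)
    (hKR : K ⊆ sphereRect) (hcont : ContinuousOn f sphereRect)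
    (hv : ∀ p ∉ K, f p = 0) : IntegrableOn f sphereRect := by
  have h1 : IntegrableOn f K := (hcont.mono hKR).integrableOn_compact hK
  have hKm : MeasurableSet K := hK.isClosed.measurableSet
  have h2 : IntegrableOn f (sphereRect \ K) := by
    apply integrableOn_zero.congr_fun _ (measurableSet_sphereRect.diff hKm)
    intro p hp; exact (hv p hp.2).symm
  exact (integrableOn_union.mpr ⟨h1, h2⟩).mono_set (fun p hp => by
    by_cases h : p ∈ K
    · exact Set.mem_union_left _ h
    · exact Set.mem_union_right _ ⟨hp, h⟩)

/-- integral over the rectangle of a θ-partial derivative vanishes -/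
lemma integral_pd1_zero {f f' : ℝ × ℝ → ℝ} {a b : ℝ}
    (ha : 0 < a) (hab : a < b) (hb : b < Real.pi)
    (hd : ∀ p : ℝ × ℝ, p ∈ sphereRect → HasDerivAt (fun t => f (t, p.2)) (f' p) p.1)
    (hvf : ∀ p : ℝ × ℝ, p.1 ∉ Set.Icc a b → f p = 0)
    (hvf' : ∀ p : ℝ × ℝ, p.1 ∉ Set.Icc a b → f' p = 0)
    (hint : IntegrableOn f' sphereRect)
    (hcont : ContinuousOn f' sphereRect) :
    ∫ p in sphereRect, f' p = 0 := by
  have hres : (volume : Measure (ℝ × ℝ)).restrict sphereRect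
      = ((volume : Measure ℝ).restrict (Set.Ioo 0 Real.pi)).prod
        ((volume : Measure ℝ).restrict (Set.Ioo 0 (2 * Real.pi))) := by
    rw [sphereRect, Measure.volume_eq_prod, ← Measure.prod_restrict]
  have hint2 : Integrable f' (((volume : Measure ℝ).restrict (Set.Ioo 0 Real.pi)).prod
      ((volume : Measure ℝ).restrict (Set.Ioo 0 (2 * Real.pi)))) := by
    rw [← hres]; exact hint
  rw [show (∫ p in sphereRect, f' p) = ∫ p, f' p ∂((volume : Measure (ℝ × ℝ)).restrict sphereRect) from rfl,
    hres, MeasureTheory.integral_prod_symm f' hint2]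
  set a' := a / 2 with ha'
  set b' := (b + Real.pi) / 2 with hb'
  have ha'b' : a' ≤ b' := by simp only [ha', hb']; linarith
  have hIccsub : Set.Icc a' b' ⊆ Set.Ioo 0 Real.pi := by
    intro x hx; exact ⟨by simp only [ha'] at hx ⊢; linarith [hx.1], by simp only [hb'] at hx ⊢; linarith [hx.2]⟩
  have inner_zero : ∀ y ∈ Set.Ioo 0 (2 * Real.pi), (∫ x in Set.Ioo 0 Real.pi, f' (x, y)) = 0 := by
    intro y hy
    have hstep1 : (∫ x in Set.Ioo 0 Real.pi, f' (x, y))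
        = ∫ x in Set.Ioo 0 Real.pi, (Set.Icc a' b').indicator (fun x => f' (x, y)) x := by
      apply setIntegral_congr_fun measurableSet_Ioo
      intro x hx
      by_cases hmem : x ∈ Set.Icc a' b'
      · rw [Set.indicator_of_mem hmem]
      · rw [Set.indicator_of_notMem hmem]
        apply hvf' (x, y)
        intro hcc
        exact hmem ⟨by simp only [ha']; linarith [hcc.1], by simp only [hb']; linarith [hcc.2]⟩
    rw [hstep1, setIntegral_indicator measurableSet_Icc,
      Set.inter_eq_self_of_subset_right hIccsub, integral_Icc_eq_integral_Ioc,
      ← intervalIntegral.integral_of_le ha'b']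
    have hderiv : ∀ x ∈ Set.uIcc a' b', HasDerivAt (fun t => f (t, y)) (f' (x, y)) x := by
      intro x hx
      rw [Set.uIcc_of_le ha'b'] at hx
      exact hd (x, y) ⟨hIccsub hx, hy⟩
    have hii : IntervalIntegrable (fun x => f' (x, y)) volume a' b' := by
      apply ContinuousOn.intervalIntegrable
      rw [Set.uIcc_of_le ha'b']
      have : ContinuousOn (fun x : ℝ => (x, y)) (Set.Icc a' b') := (Continuous.continuousOn (by fun_prop))
      exact hcont.comp this (fun x hx => ⟨hIccsub hx, hy⟩)
    rw [intervalIntegral.integral_eq_sub_of_hasDerivAt hderiv hii]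
    have hz1 : f (b', y) = 0 := hvf _ (by intro h; simp only [hb'] at h; have := h.2; linarith [this, hab])
    have hz2 : f (a', y) = 0 := hvf _ (by intro h; simp only [ha'] at h; have := h.1; linarith [this, hab])
    rw [hz1, hz2, sub_zero]
  calc (∫ y in Set.Ioo 0 (2 * Real.pi), ∫ x in Set.Ioo 0 Real.pi, f' (x, y))
      = ∫ y in Set.Ioo 0 (2 * Real.pi), (0 : ℝ) := by
        apply setIntegral_congr_fun measurableSet_Ioo
        intro y hy; exact inner_zero y hy
    _ = 0 := by simp

/-- integral over the rectangle of a φ-partial derivative vanishes -/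
lemma integral_pd2_zero {f f' : ℝ × ℝ → ℝ} {α β : ℝ}
    (hα : 0 < α) (hαβ : α < β) (hβ : β < 2 * Real.pi)
    (hd : ∀ p : ℝ × ℝ, p ∈ sphereRect → HasDerivAt (fun t => f (p.1, t)) (f' p) p.2)
    (hvf : ∀ p : ℝ × ℝ, p.2 ∉ Set.Icc α β → f p = 0)
    (hvf' : ∀ p : ℝ × ℝ, p.2 ∉ Set.Icc α β → f' p = 0)
    (hint : IntegrableOn f' sphereRect)
    (hcont : ContinuousOn f' sphereRect) :
    ∫ p in sphereRect, f' p = 0 := by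
  have hres : (volume : Measure (ℝ × ℝ)).restrict sphereRect
      = ((volume : Measure ℝ).restrict (Set.Ioo 0 Real.pi)).prod
        ((volume : Measure ℝ).restrict (Set.Ioo 0 (2 * Real.pi))) := by
    rw [sphereRect, Measure.volume_eq_prod, ← Measure.prod_restrict]
  have hint2 : Integrable f' (((volume : Measure ℝ).restrict (Set.Ioo 0 Real.pi)).prod
      ((volume : Measure ℝ).restrict (Set.Ioo 0 (2 * Real.pi)))) := by
    rw [← hres]; exact hint
  rw [show (∫ p in sphereRect, f' p) = ∫ p, f' p ∂((volume : Measure (ℝ × ℝ)).restrict sphereRect) from rfl,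
    hres, MeasureTheory.integral_prod f' hint2]
  set a' := α / 2 with ha'
  set b' := (β + 2 * Real.pi) / 2 with hb'
  have ha'b' : a' ≤ b' := by simp only [ha', hb']; linarith
  have hIccsub : Set.Icc a' b' ⊆ Set.Ioo 0 (2 * Real.pi) := by
    intro x hx; exact ⟨by simp only [ha'] at hx ⊢; linarith [hx.1], by simp only [hb'] at hx ⊢; linarith [hx.2]⟩
  have inner_zero : ∀ x ∈ Set.Ioo 0 Real.pi, (∫ y in Set.Ioo 0 (2 * Real.pi), f' (x, y)) = 0 := by
    intro x hx
    have hstep1 : (∫ y in Set.Ioo 0 (2 * Real.pi), f' (x, y))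
        = ∫ y in Set.Ioo 0 (2 * Real.pi), (Set.Icc a' b').indicator (fun y => f' (x, y)) y := by
      apply setIntegral_congr_fun measurableSet_Ioo
      intro y hy
      by_cases hmem : y ∈ Set.Icc a' b'
      · rw [Set.indicator_of_mem hmem]
      · rw [Set.indicator_of_notMem hmem]
        apply hvf' (x, y)
        intro hcc
        exact hmem ⟨by simp only [ha']; linarith [hcc.1], by simp only [hb']; linarith [hcc.2]⟩
    rw [hstep1, setIntegral_indicator measurableSet_Icc,
      Set.inter_eq_self_of_subset_right hIccsub, integral_Icc_eq_integral_Ioc,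
      ← intervalIntegral.integral_of_le ha'b']
    have hderiv : ∀ y ∈ Set.uIcc a' b', HasDerivAt (fun t => f (x, t)) (f' (x, y)) y := by
      intro y hy
      rw [Set.uIcc_of_le ha'b'] at hy
      exact hd (x, y) ⟨hx, hIccsub hy⟩
    have hii : IntervalIntegrable (fun y => f' (x, y)) volume a' b' := by
      apply ContinuousOn.intervalIntegrable
      rw [Set.uIcc_of_le ha'b']
      have : ContinuousOn (fun y : ℝ => (x, y)) (Set.Icc a' b') := (Continuous.continuousOn (by fun_prop))
      exact hcont.comp this (fun y hy => ⟨hx, hIccsub hy⟩)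
    rw [intervalIntegral.integral_eq_sub_of_hasDerivAt hderiv hii]
    have hz1 : f (x, b') = 0 := hvf _ (by intro h; simp only [hb'] at h; have := h.2; linarith [this, hαβ])
    have hz2 : f (x, a') = 0 := hvf _ (by intro h; simp only [ha'] at h; have := h.1; linarith [this, hαβ])
    rw [hz1, hz2, sub_zero]
  calc (∫ x in Set.Ioo 0 Real.pi, ∫ y in Set.Ioo 0 (2 * Real.pi), f' (x, y))
      = ∫ x in Set.Ioo 0 Real.pi, (0 : ℝ) := by
        apply setIntegral_congr_fun measurableSet_Ioo
        intro x hx; exact inner_zero x hx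
    _ = 0 := by simp

/-- The scalar half-Dirac operator. -/
def Lop (ε : ℝ) (u : ℝ × ℝ → ℂ) (p : ℝ × ℝ) : ℂ :=
  Complex.I * (pt u p + ((Real.cos p.1 / Real.sin p.1 / 2 : ℝ) : ℂ) * u p)
  + (ε : ℂ) * (((Real.sin p.1)⁻¹ : ℝ) : ℂ) * pp u p

/-- The nonnegative (sum of squares) part. -/
def Qfun (ε : ℝ) (u : ℝ × ℝ → ℂ) (p : ℝ × ℝ) : ℝ :=
  Real.sin p.1 * Complex.normSq (pt u p - ((Real.cos p.1 / Real.sin p.1 / 4 : ℝ) : ℂ) * u p)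
  + (Real.sin p.1)⁻¹ * Complex.normSq (pp u p
      + Complex.I * (ε : ℂ) * ((Real.cos p.1 / 2 : ℝ) : ℂ) * u p - ((nn p.2 : ℝ) : ℂ) * u p)
  + 3 / 16 * (Real.cos p.1 ^ 2 / Real.sin p.1) * Complex.normSq (u p)

lemma vanish_all (u : ℝ × ℝ → ℂ) (p : ℝ × ℝ) (hp : p ∉ tsupport u) :
    u p = 0 ∧ pt u p = 0 ∧ pp u p = 0 ∧ pt (pp u) p = 0 ∧ pp (pt u) p = 0 :=
  ⟨image_eq_zero_of_notMem_tsupport hp, pt_eq_zero_of_not_mem u p hp,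
    pp_eq_zero_of_not_mem u p hp,
    pt_eq_zero_of_not_mem _ p (fun h => hp (tsupport_pp_subset u h)),
    pp_eq_zero_of_not_mem _ p (fun h => hp (tsupport_pt_subset u h))⟩

lemma Lop_zero (ε : ℝ) (u : ℝ × ℝ → ℂ) (p : ℝ × ℝ) (hp : p ∉ tsupport u) :
    Lop ε u p = 0 := by
  obtain ⟨h1, h2, h3, _, _⟩ := vanish_all u p hp
  simp [Lop, h1, h2, h3]

lemma Qfun_zero (ε : ℝ) (u : ℝ × ℝ → ℂ) (p : ℝ × ℝ) (hp : p ∉ tsupport u) :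
    Qfun ε u p = 0 := by
  obtain ⟨h1, h2, h3, _, _⟩ := vanish_all u p hp
  simp [Qfun, h1, h2, h3]

lemma Ffun_zero (ε : ℝ) (u : ℝ × ℝ → ℂ) (p : ℝ × ℝ) (hp : p ∉ tsupport u) :
    Ffun ε u p = 0 := by
  obtain ⟨h1, h2, h3, _, _⟩ := vanish_all u p hp
  simp [Ffun, h1, h3]

lemma Gfun_zero (ε : ℝ) (u : ℝ × ℝ → ℂ) (p : ℝ × ℝ) (hp : p ∉ tsupport u) :
    Gfun ε u p = 0 := by
  obtain ⟨h1, h2, h3, _, _⟩ := vanish_all u p hp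
  simp [Gfun, h1, h2]

lemma Fpd_zero (ε : ℝ) (u : ℝ × ℝ → ℂ) (p : ℝ × ℝ) (hp : p ∉ tsupport u) :
    Fpd ε u p = 0 := by
  obtain ⟨h1, h2, h3, h4, h5⟩ := vanish_all u p hp
  simp [Fpd, h1, h2, h3, h4]

lemma Gpd_zero (ε : ℝ) (u : ℝ × ℝ → ℂ) (p : ℝ × ℝ) (hp : p ∉ tsupport u) :
    Gpd ε u p = 0 := by
  obtain ⟨h1, h2, h3, h4, h5⟩ := vanish_all u p hp
  simp [Gpd, h1, h2, h3, h5]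

lemma pointwise_identity (ε : ℝ) (u : ℝ × ℝ → ℂ) (hu : ContDiff ℝ (⊤ : ℕ∞) u)
    (hε : ε = 1 ∨ ε = -1) (p : ℝ × ℝ) (hp : p ∈ sphereRect) :
    Complex.normSq (Lop ε u p) * Real.sin p.1
    = Complex.normSq (u p) * Real.sin p.1
      + (Qfun ε u p + (Fpd ε u p + Gpd ε u p)) := by
  have hs : 0 < Real.sin p.1 := Real.sin_pos_of_pos_of_lt_pi hp.1.1 hp.1.2
  have hkey := key_alg (Real.sin p.1) (Real.cos p.1) (nn p.2) ε hs.ne' hε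
    (u p) (pt u p) (pp u p) (pt (pp u) p)
  have hsc : Real.sin p.1 ^ 2 + Real.cos p.1 ^ 2 = 1 := Real.sin_sq_add_cos_sq _
  have hmix : pp (pt u) p = pt (pp u) p := (mixed_symm u hu p).symm
  simp only [Lop, Qfun, Fpd, Gpd, hmix]
  linear_combination hkey - Complex.normSq (u p) / (4 * Real.sin p.1) * hsc

lemma sin_ne_on (p : ℝ × ℝ) (hp : p ∈ sphereRect) : Real.sin p.1 ≠ 0 :=
  (Real.sin_pos_of_pos_of_lt_pi hp.1.1 hp.1.2).ne'

lemma sin2_ne_on (p : ℝ × ℝ) (hp : p ∈ sphereRect) : Real.sin (p.2 / 2) ≠ 0 := by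
  apply (Real.sin_pos_of_pos_of_lt_pi _ _).ne'
  · exact div_pos hp.2.1 two_pos
  · have := hp.2.2; linarith

lemma contOn_cot2 : ContinuousOn (fun p : ℝ × ℝ => Real.cos p.1 / Real.sin p.1 / 2) sphereRect :=
  (((Real.continuous_cos.comp continuous_fst).continuousOn.div
    (Real.continuous_sin.comp continuous_fst).continuousOn sin_ne_on).div_const 2)

lemma contOn_cot4 : ContinuousOn (fun p : ℝ × ℝ => Real.cos p.1 / Real.sin p.1 / 4) sphereRect :=
  (((Real.continuous_cos.comp continuous_fst).continuousOn.div
    (Real.continuous_sin.comp continuous_fst).continuousOn sin_ne_on).div_const 4)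

lemma contOn_invsin : ContinuousOn (fun p : ℝ × ℝ => (Real.sin p.1)⁻¹) sphereRect :=
  (Real.continuous_sin.comp continuous_fst).continuousOn.inv₀ sin_ne_on

lemma contOn_nn : ContinuousOn (fun p : ℝ × ℝ => nn p.2) sphereRect := by
  unfold nn
  exact ((Real.continuous_cos.comp (continuous_snd.div_const 2)).continuousOn.div
    (Real.continuous_sin.comp (continuous_snd.div_const 2)).continuousOn sin2_ne_on).div_const 2

lemma contOn_L (ε : ℝ) (u : ℝ × ℝ → ℂ) (hu : ContDiff ℝ (⊤ : ℕ∞) u) :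
    ContinuousOn (fun p => Complex.normSq (Lop ε u p) * Real.sin p.1) sphereRect := by
  have h1 : Continuous (pt u) := (contDiff_pt u hu).continuous
  have h2 : Continuous (pp u) := (contDiff_pp u hu).continuous
  have hu' : Continuous u := hu.continuous
  have hL : ContinuousOn (Lop ε u) sphereRect := by
    unfold Lop
    apply ContinuousOn.add
    · exact continuousOn_const.mul (h1.continuousOn.add
        ((Complex.continuous_ofReal.comp_continuousOn contOn_cot2).mul hu'.continuousOn))
    · exact (continuousOn_const.mul
        (Complex.continuous_ofReal.comp_continuousOn contOn_invsin)).mul h2.continuousOn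
  exact (Complex.continuous_normSq.comp_continuousOn hL).mul
    (Real.continuous_sin.comp continuous_fst).continuousOn

lemma contOn_R (u : ℝ × ℝ → ℂ) (hu : ContDiff ℝ (⊤ : ℕ∞) u) :
    ContinuousOn (fun p => Complex.normSq (u p) * Real.sin p.1) sphereRect :=
  ((Complex.continuous_normSq.comp hu.continuous).mul
    (Real.continuous_sin.comp continuous_fst)).continuousOn

lemma contOn_Q (ε : ℝ) (u : ℝ × ℝ → ℂ) (hu : ContDiff ℝ (⊤ : ℕ∞) u) :
    ContinuousOn (Qfun ε u) sphereRect := by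
  have h1 : Continuous (pt u) := (contDiff_pt u hu).continuous
  have h2 : Continuous (pp u) := (contDiff_pp u hu).continuous
  have hu' : Continuous u := hu.continuous
  unfold Qfun
  apply ContinuousOn.add
  apply ContinuousOn.add
  · exact ((Real.continuous_sin.comp continuous_fst).continuousOn).mul
      (Complex.continuous_normSq.comp_continuousOn
        (h1.continuousOn.sub ((Complex.continuous_ofReal.comp_continuousOn contOn_cot4).mul
          hu'.continuousOn)))
  · apply contOn_invsin.mul
    apply Complex.continuous_normSq.comp_continuousOn
    apply ContinuousOn.sub
    · exact h2.continuousOn.add ((Continuous.continuousOn (by fun_prop)).mul hu'.continuousOn)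
    · exact (Complex.continuous_ofReal.comp_continuousOn contOn_nn).mul hu'.continuousOn
  · exact (continuousOn_const.mul (((Real.continuous_cos.comp continuous_fst).pow 2).continuousOn.div
      (Real.continuous_sin.comp continuous_fst).continuousOn sin_ne_on)).mul
      (Complex.continuous_normSq.comp hu').continuousOn

lemma contOn_Fpd (ε : ℝ) (u : ℝ × ℝ → ℂ) (hu : ContDiff ℝ (⊤ : ℕ∞) u) :
    ContinuousOn (Fpd ε u) sphereRect := by
  have h1 : Continuous (pt u) := (contDiff_pt u hu).continuous
  have h2 : Continuous (pp u) := (contDiff_pp u hu).continuous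
  have h3 : Continuous (pt (pp u)) := (contDiff_pt (pp u) (contDiff_pp u hu)).continuous
  have hu' : Continuous u := hu.continuous
  have hns : Continuous Complex.normSq := Complex.continuous_normSq
  apply Continuous.continuousOn
  unfold Fpd
  fun_prop

lemma contOn_Gpd (ε : ℝ) (u : ℝ × ℝ → ℂ) (hu : ContDiff ℝ (⊤ : ℕ∞) u) :
    ContinuousOn (Gpd ε u) sphereRect := by
  have h1 : Continuous (pt u) := (contDiff_pt u hu).continuous
  have h2 : Continuous (pp u) := (contDiff_pp u hu).continuous
  have h3 : Continuous (pp (pt u)) := (contDiff_pp (pt u) (contDiff_pt u hu)).continuous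
  have hu' : Continuous u := hu.continuous
  unfold Gpd
  apply ContinuousOn.sub
  apply ContinuousOn.add
  · exact ((continuousOn_const.sub ((contOn_nn.pow 2))).div
      (Real.continuous_sin.comp continuous_fst).continuousOn sin_ne_on).mul
      (Complex.continuous_normSq.comp hu').continuousOn
  · exact (contOn_nn.div (Real.continuous_sin.comp continuous_fst).continuousOn sin_ne_on).mul
      (Continuous.continuousOn (by fun_prop))
  · exact Continuous.continuousOn (by fun_prop)

lemma scalar_core (u : ℝ × ℝ → ℂ) (hu : ContDiff ℝ (⊤ : ℕ∞) u) (hcs : HasCompactSupport u)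
    (hsupp : tsupport u ⊆ sphereRect) (ε : ℝ) (hε : ε = 1 ∨ ε = -1) :
    ∫ p in sphereRect, Complex.normSq (Lop ε u p) * Real.sin p.1
      ≥ ∫ p in sphereRect, Complex.normSq (u p) * Real.sin p.1 := by
  obtain ⟨a, b, α, β, h0a, hab, hbπ, h0α, hαβ, hβ2π, hbox⟩ := exists_box hcs hsupp
  set K : Set (ℝ × ℝ) := Set.Icc a b ×ˢ Set.Icc α β with hKdef
  have hKcomp : IsCompact K := isCompact_Icc.prod isCompact_Icc
  have hKsub : K ⊆ sphereRect := by
    rintro p ⟨hp1, hp2⟩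
    exact ⟨⟨lt_of_lt_of_le h0a hp1.1, lt_of_le_of_lt hp1.2 hbπ⟩,
      ⟨lt_of_lt_of_le h0α hp2.1, lt_of_le_of_lt hp2.2 hβ2π⟩⟩
  have hnotsupp : ∀ p : ℝ × ℝ, p ∉ K → p ∉ tsupport u := fun p hp h => hp (hbox h)
  -- integrabilities
  have hiL : IntegrableOn (fun p => Complex.normSq (Lop ε u p) * Real.sin p.1) sphereRect :=
    integrableOn_rect hKcomp hKsub (contOn_L ε u hu)
      (fun p hp => by rw [Lop_zero ε u p (hnotsupp p hp)]; simp)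
  have hiR : IntegrableOn (fun p => Complex.normSq (u p) * Real.sin p.1) sphereRect :=
    integrableOn_rect hKcomp hKsub (contOn_R u hu)
      (fun p hp => by rw [image_eq_zero_of_notMem_tsupport (hnotsupp p hp)]; simp)
  have hiQ : IntegrableOn (Qfun ε u) sphereRect :=
    integrableOn_rect hKcomp hKsub (contOn_Q ε u hu)
      (fun p hp => Qfun_zero ε u p (hnotsupp p hp))
  have hiF : IntegrableOn (Fpd ε u) sphereRect :=
    integrableOn_rect hKcomp hKsub (contOn_Fpd ε u hu)
      (fun p hp => Fpd_zero ε u p (hnotsupp p hp))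
  have hiG : IntegrableOn (Gpd ε u) sphereRect :=
    integrableOn_rect hKcomp hKsub (contOn_Gpd ε u hu)
      (fun p hp => Gpd_zero ε u p (hnotsupp p hp))
  -- rewrite the left integral with the pointwise identity
  have hsplit : ∫ p in sphereRect, Complex.normSq (Lop ε u p) * Real.sin p.1
      = (∫ p in sphereRect, Complex.normSq (u p) * Real.sin p.1)
        + ((∫ p in sphereRect, Qfun ε u p)
          + ((∫ p in sphereRect, Fpd ε u p) + (∫ p in sphereRect, Gpd ε u p))) := by
    rw [setIntegral_congr_fun measurableSet_sphereRect
      (fun p hp => pointwise_identity ε u hu hε p hp)]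
    have hQFG : IntegrableOn (fun p => Qfun ε u p + (Fpd ε u p + Gpd ε u p)) sphereRect :=
      hiQ.add (hiF.add hiG)
    have hFG : IntegrableOn (fun p => Fpd ε u p + Gpd ε u p) sphereRect := hiF.add hiG
    rw [integral_add hiR hQFG, integral_add hiQ hFG, integral_add hiF hiG]
  -- the divergence terms integrate to zero
  have hF0 : ∫ p in sphereRect, Fpd ε u p = 0 := by
    apply integral_pd1_zero h0a hab hbπ (fun p _ => hasDerivAt_Ffun ε u hu p)
      _ _ hiF (contOn_Fpd ε u hu)
    · intro p hp
      apply Ffun_zero ε u p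
      apply hnotsupp
      rw [hKdef]; intro hmem; exact hp hmem.1
    · intro p hp
      apply Fpd_zero ε u p
      apply hnotsupp
      rw [hKdef]; intro hmem; exact hp hmem.1
  have hG0 : ∫ p in sphereRect, Gpd ε u p = 0 := by
    apply integral_pd2_zero h0α hαβ hβ2π
      (fun p hp => hasDerivAt_Gfun ε u hu p (sin2_ne_on p hp))
      _ _ hiG (contOn_Gpd ε u hu)
    · intro p hp
      apply Gfun_zero ε u p
      apply hnotsupp
      rw [hKdef]; intro hmem; exact hp hmem.2
    · intro p hp
      apply Gpd_zero ε u p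
      apply hnotsupp
      rw [hKdef]; intro hmem; exact hp hmem.2
  have hQ0 : 0 ≤ ∫ p in sphereRect, Qfun ε u p := by
    apply setIntegral_nonneg measurableSet_sphereRect
    intro p hp
    have hs : 0 < Real.sin p.1 := Real.sin_pos_of_pos_of_lt_pi hp.1.1 hp.1.2
    unfold Qfun
    have q1 : 0 ≤ Real.sin p.1 * Complex.normSq (pt u p
        - ((Real.cos p.1 / Real.sin p.1 / 4 : ℝ) : ℂ) * u p) :=
      mul_nonneg hs.le (Complex.normSq_nonneg _)
    have q2 : 0 ≤ (Real.sin p.1)⁻¹ * Complex.normSq (pp u p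
        + Complex.I * (ε : ℂ) * ((Real.cos p.1 / 2 : ℝ) : ℂ) * u p - ((nn p.2 : ℝ) : ℂ) * u p) :=
      mul_nonneg (inv_nonneg.mpr hs.le) (Complex.normSq_nonneg _)
    have q3 : 0 ≤ 3 / 16 * (Real.cos p.1 ^ 2 / Real.sin p.1) * Complex.normSq (u p) := by
      apply mul_nonneg (mul_nonneg (by norm_num) (div_nonneg (sq_nonneg _) hs.le))
        (Complex.normSq_nonneg _)
    linarith
  rw [hsplit, hF0, hG0]
  linarith

lemma deriv_proj (g : ℝ → Fin 2 → ℂ) (x : ℝ) (i : Fin 2) (hg : DifferentiableAt ℝ g x) :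
    deriv (fun t => g t i) x = deriv g x i := by
  have := ((ContinuousLinearMap.proj (R := ℝ) (φ := fun _ : Fin 2 => ℂ) i).hasFDerivAt.comp_hasDerivAt
    x hg.hasDerivAt)
  simpa [Function.comp_def] using this.deriv

lemma line1_diff (phi : ℝ × ℝ → Fin 2 → ℂ) (hsm : ContDiff ℝ (⊤ : ℕ∞) phi) (p : ℝ × ℝ) :
    DifferentiableAt ℝ (fun t => phi (t, p.2)) p.1 := by
  have h1 : DifferentiableAt ℝ (fun t : ℝ => (t, p.2)) p.1 :=
    differentiableAt_id.prodMk (differentiableAt_const _)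
  exact ((hsm.differentiable (by simp)) (p.1, p.2)).comp p.1 h1

lemma line2_diff (phi : ℝ × ℝ → Fin 2 → ℂ) (hsm : ContDiff ℝ (⊤ : ℕ∞) phi) (p : ℝ × ℝ) :
    DifferentiableAt ℝ (fun t => phi (p.1, t)) p.2 := by
  have h1 : DifferentiableAt ℝ (fun t : ℝ => (p.1, t)) p.2 :=
    (differentiableAt_const _).prodMk differentiableAt_id
  exact ((hsm.differentiable (by simp)) (p.1, p.2)).comp p.2 h1

lemma pdTheta_proj (phi : ℝ × ℝ → Fin 2 → ℂ) (hsm : ContDiff ℝ (⊤ : ℕ∞) phi) (p : ℝ × ℝ) (i : Fin 2) :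
    pt (fun q => phi q i) p = pdTheta phi p i := by
  unfold pt pdTheta
  exact deriv_proj _ _ i (line1_diff phi hsm p)

lemma pdPhi_proj (phi : ℝ × ℝ → Fin 2 → ℂ) (hsm : ContDiff ℝ (⊤ : ℕ∞) phi) (p : ℝ × ℝ) (i : Fin 2) :
    pp (fun q => phi q i) p = pdPhi phi p i := by
  unfold pp pdPhi
  exact deriv_proj _ _ i (line2_diff phi hsm p)

lemma slDs_comp0 (phi : ℝ × ℝ → Fin 2 → ℂ) (hsm : ContDiff ℝ (⊤ : ℕ∞) phi) (p : ℝ × ℝ) :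
    slDs phi p 0 = Lop (-1) (fun q => phi q 1) p := by
  rw [Lop, pdTheta_proj phi hsm p, pdPhi_proj phi hsm p]
  simp only [slDs, sigmaX, sigmaY, Matrix.mulVec, dotProduct, Fin.sum_univ_two,
    Matrix.of_apply, Matrix.cons_val', Matrix.cons_val_zero, Matrix.cons_val_one,
    Matrix.head_cons, Matrix.empty_val', Matrix.cons_val_fin_one, Matrix.head_fin_const,
    Pi.add_apply, Pi.smul_apply, Pi.sub_apply, smul_eq_mul, Complex.ofReal_neg,
    Complex.ofReal_one]
  push_cast
  ring_nf
  rw [Complex.I_sq]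
  ring

lemma slDs_comp1 (phi : ℝ × ℝ → Fin 2 → ℂ) (hsm : ContDiff ℝ (⊤ : ℕ∞) phi) (p : ℝ × ℝ) :
    slDs phi p 1 = Lop 1 (fun q => phi q 0) p := by
  rw [Lop, pdTheta_proj phi hsm p, pdPhi_proj phi hsm p]
  simp only [slDs, sigmaX, sigmaY, Matrix.mulVec, dotProduct, Fin.sum_univ_two,
    Matrix.of_apply, Matrix.cons_val', Matrix.cons_val_zero, Matrix.cons_val_one,
    Matrix.head_cons, Matrix.empty_val', Matrix.cons_val_fin_one, Matrix.head_fin_const,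
    Pi.add_apply, Pi.smul_apply, Pi.sub_apply, smul_eq_mul, Complex.ofReal_one]
  push_cast
  ring_nf
  rw [Complex.I_sq]
  ring

theorem stmt13' (phi : ℝ × ℝ → Fin 2 → ℂ) (hsm : ContDiff ℝ (⊤ : ℕ∞) phi)
    (hcs : HasCompactSupport phi) (hsupp : tsupport phi ⊆ sphereRect) :
    ∫ p in sphereRect, nsq (slDs phi p) * Real.sin p.1 ≥
      ∫ p in sphereRect, nsq (phi p) * Real.sin p.1 := by
  set u0 : ℝ × ℝ → ℂ := fun q => phi q 0 with hu0def
  set u1 : ℝ × ℝ → ℂ := fun q => phi q 1 with hu1def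
  have hu0 : ContDiff ℝ (⊤ : ℕ∞) u0 :=
    (ContinuousLinearMap.proj (R := ℝ) (φ := fun _ : Fin 2 => ℂ) 0).contDiff.comp hsm
  have hu1 : ContDiff ℝ (⊤ : ℕ∞) u1 :=
    (ContinuousLinearMap.proj (R := ℝ) (φ := fun _ : Fin 2 => ℂ) 1).contDiff.comp hsm
  have hcs0 : HasCompactSupport u0 := hcs.comp_left (g := fun v : Fin 2 → ℂ => v 0) rfl
  have hcs1 : HasCompactSupport u1 := hcs.comp_left (g := fun v : Fin 2 → ℂ => v 1) rfl
  have hsup0 : tsupport u0 ⊆ sphereRect := by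
    refine subset_trans (closure_mono ?_) hsupp
    intro p hp hz
    exact hp (by rw [hu0def]; simp only [hz]; rfl)
  have hsup1 : tsupport u1 ⊆ sphereRect := by
    refine subset_trans (closure_mono ?_) hsupp
    intro p hp hz
    exact hp (by rw [hu1def]; simp only [hz]; rfl)
  have hDcomp : ∀ p : ℝ × ℝ, nsq (slDs phi p) * Real.sin p.1
      = Complex.normSq (Lop 1 u0 p) * Real.sin p.1
        + Complex.normSq (Lop (-1) u1 p) * Real.sin p.1 := by
    intro p
    rw [nsq, Fin.sum_univ_two, slDs_comp0 phi hsm p, slDs_comp1 phi hsm p]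
    ring
  have hNcomp : ∀ p : ℝ × ℝ, nsq (phi p) * Real.sin p.1
      = Complex.normSq (u0 p) * Real.sin p.1 + Complex.normSq (u1 p) * Real.sin p.1 := by
    intro p
    rw [nsq, Fin.sum_univ_two]
    ring
  have hiL0 : IntegrableOn (fun p => Complex.normSq (Lop 1 u0 p) * Real.sin p.1) sphereRect :=
    integrableOn_rect hcs0 hsup0 (contOn_L 1 u0 hu0)
      (fun p hp => by rw [Lop_zero 1 u0 p hp]; simp)
  have hiL1 : IntegrableOn (fun p => Complex.normSq (Lop (-1) u1 p) * Real.sin p.1) sphereRect :=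
    integrableOn_rect hcs1 hsup1 (contOn_L (-1) u1 hu1)
      (fun p hp => by rw [Lop_zero (-1) u1 p hp]; simp)
  have hiR0 : IntegrableOn (fun p => Complex.normSq (u0 p) * Real.sin p.1) sphereRect :=
    integrableOn_rect hcs0 hsup0 (contOn_R u0 hu0)
      (fun p hp => by rw [image_eq_zero_of_notMem_tsupport hp]; simp)
  have hiR1 : IntegrableOn (fun p => Complex.normSq (u1 p) * Real.sin p.1) sphereRect :=
    integrableOn_rect hcs1 hsup1 (contOn_R u1 hu1)
      (fun p hp => by rw [image_eq_zero_of_notMem_tsupport hp]; simp)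
  have hL : ∫ p in sphereRect, nsq (slDs phi p) * Real.sin p.1
      = (∫ p in sphereRect, Complex.normSq (Lop 1 u0 p) * Real.sin p.1)
        + ∫ p in sphereRect, Complex.normSq (Lop (-1) u1 p) * Real.sin p.1 := by
    rw [setIntegral_congr_fun measurableSet_sphereRect (fun p _ => hDcomp p),
      integral_add hiL0 hiL1]
  have hR : ∫ p in sphereRect, nsq (phi p) * Real.sin p.1
      = (∫ p in sphereRect, Complex.normSq (u0 p) * Real.sin p.1)
        + ∫ p in sphereRect, Complex.normSq (u1 p) * Real.sin p.1 := by
    rw [setIntegral_congr_fun measurableSet_sphereRect (fun p _ => hNcomp p),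
      integral_add hiR0 hiR1]
  rw [hL, hR]
  exact add_le_add (scalar_core u0 hu0 hcs0 hsup0 1 (Or.inl rfl))
    (scalar_core u1 hu1 hcs1 hsup1 (-1) (Or.inr rfl))


/-- the spinorial Poincaré inequality `‖slDs φ‖² ≥ ‖φ‖²` in `L²`
of the sphere. -/
theorem stmt13 (phi : ℝ × ℝ → Fin 2 → ℂ) (hsm : ContDiff ℝ (⊤ : ℕ∞) phi)
    (hcs : HasCompactSupport phi) (hsupp : tsupport phi ⊆ sphereRect) :
    ∫ p in sphereRect, nsq (slDs phi p) * Real.sin p.1 ≥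
      ∫ p in sphereRect, nsq (phi p) * Real.sin p.1 :=
  stmt13' phi hsm hcs hsupp

end
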